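/- Let n, m ≥ 2 be natural numbers, b a nonnegative integer with b < m, and c ≥ 1 a natural number such that for every prime p dividing c there exists a natural number k ≥ 1 with p^k ≥ 3, φ(p^k) ∣ n, and m ≤ p^k − 1. Then the equation x_1^n + ⋯ + x_m^n = b·c^n has no solution in positive integers. In particular, under these hypotheses the equation x_1^n + ⋯ + x_m^n = c^n has no solution in positive integers. -/

import Mathlib

/-!
Modulo `q = p ^ k` with `φ q ∣ n` (and hence `k ≤ n`), every `n`-th power is `0` or `1`
according as `p` divides the base. So if `q ∣ ∑ xᵢ ^ n` with fewer than `q` terms, the number of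
terms prime to `p` is a multiple of `q` smaller than `q`, i.e. `p` divides every `xᵢ`. Applied to
`∑ xᵢ ^ n = b * c ^ n` with `p ∣ c`, this lets us divide the whole equation by `p ^ n`; descending
on `c` we reach `c ≤ 1`, where `∑ xᵢ ^ n ≥ m > b` for positive `xᵢ`.
-/

open Finset
open scoped Nat

theorem Nat.le_totient_prime_pow {p : ℕ} (hp : p.Prime) (k : ℕ) : k ≤ φ (p ^ k) := by
  rcases Nat.eq_zero_or_pos k with rfl | hk
  · exact Nat.zero_le _
  rw [Nat.totient_prime_pow hp hk]
  calc k ≤ 2 ^ (k - 1) := by have := Nat.lt_two_pow_self (n := k - 1); omega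
    _ ≤ p ^ (k - 1) := Nat.pow_le_pow_left hp.two_le _
    _ ≤ p ^ (k - 1) * (p - 1) := Nat.le_mul_of_pos_right _ (by have := hp.two_le; omega)

theorem ZMod.natCast_pow_eq_ite {p k n : ℕ} (hp : p.Prime) (hn : 0 < n) (hφ : φ (p ^ k) ∣ n)
    (x : ℕ) : (x : ZMod (p ^ k)) ^ n = if p ∣ x then 0 else 1 := by
  split_ifs with hpx
  · have hkn : k ≤ n := (Nat.le_totient_prime_pow hp k).trans (Nat.le_of_dvd hn hφ)
    rw [← Nat.cast_pow, ZMod.natCast_eq_zero_iff]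
    exact (pow_dvd_pow p hkn).trans (pow_dvd_pow_of_dvd hpx n)
  · have hcop : x.Coprime (p ^ k) := ((hp.coprime_iff_not_dvd.2 hpx).pow_left k).symm
    obtain ⟨u, hu⟩ := (ZMod.isUnit_iff_coprime x _).2 hcop
    obtain ⟨d, rfl⟩ := hφ
    rw [← hu, pow_mul, ← Units.val_pow_eq_pow_val, ZMod.pow_totient, Units.val_one, one_pow]

theorem prime_dvd_of_prime_pow_dvd_sum_pow {ι : Type*} [Fintype ι] {p k n : ℕ} (hp : p.Prime)
    (hn : 0 < n) (hφ : φ (p ^ k) ∣ n) (hcard : Fintype.card ι < p ^ k) {x : ι → ℕ}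
    (hdvd : p ^ k ∣ ∑ i, x i ^ n) (i : ι) : p ∣ x i := by
  have hsum : ((∑ j, x j ^ n : ℕ) : ZMod (p ^ k)) = #{j | ¬ p ∣ x j} := by
    push_cast
    simp only [ZMod.natCast_pow_eq_ite hp hn hφ, Finset.sum_ite, sum_const_zero, sum_const,
      nsmul_one, zero_add]
  have ht : #{j | ¬ p ∣ x j} = 0 := by
    refine Nat.eq_zero_of_dvd_of_lt ?_ ((card_le_univ _).trans_lt hcard)
    rwa [← ZMod.natCast_eq_zero_iff, ← hsum, ZMod.natCast_eq_zero_iff]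
  by_contra hpx
  exact Finset.card_ne_zero.2 ⟨i, by simpa using hpx⟩ ht

theorem sum_pow_ne_mul_pow {ι : Type*} [Fintype ι] {n b : ℕ} (hn : 0 < n)
    (hb : b < Fintype.card ι) {x : ι → ℕ} (hx : ∀ i, 0 < x i) {c : ℕ}
    (hc : ∀ p : ℕ, p.Prime → p ∣ c → ∃ k, φ (p ^ k) ∣ n ∧ Fintype.card ι < p ^ k) :
    ∑ i, x i ^ n ≠ b * c ^ n := by
  induction c using Nat.strong_induction_on generalizing x with
  | _ c ih =>
  intro hsum
  rcases le_or_gt c 1 with hc1 | hc1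
  · have hcard : Fintype.card ι ≤ ∑ i, x i ^ n := by
      simpa using Finset.sum_le_sum fun i (_ : i ∈ univ) => Nat.one_le_pow n _ (hx i)
    have : b * c ^ n ≤ b :=
      mul_le_of_le_one_right (Nat.zero_le b) (pow_le_one₀ (Nat.zero_le c) hc1)
    omega
  obtain ⟨p, hp, c', rfl⟩ := Nat.exists_prime_and_dvd hc1.ne'
  obtain ⟨k, hφ, hcard⟩ := hc p hp (dvd_mul_right p c')
  have hkn : k ≤ n := (Nat.le_totient_prime_pow hp k).trans (Nat.le_of_dvd hn hφ)
  have hpx : ∀ i, p ∣ x i := prime_dvd_of_prime_pow_dvd_sum_pow hp hn hφ hcard <| by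
    rw [hsum, mul_pow]
    exact Dvd.dvd.mul_left (dvd_mul_of_dvd_left (pow_dvd_pow p hkn) _) b
  choose y hy using hpx
  refine ih c' ?_ (x := y) (fun i => Nat.pos_of_mul_pos_left (hy i ▸ hx i))
    (fun q hq hqc => hc q hq (dvd_mul_of_dvd_right hqc p)) ?_
  · exact lt_mul_left (Nat.pos_of_ne_zero (by rintro rfl; omega)) hp.one_lt
  · apply Nat.eq_of_mul_eq_mul_left (pow_pos hp.pos n)
    simp only [mul_sum, ← mul_pow, ← hy, hsum]
    ring

theorem stmt_17_general (n m b c : ℕ) (hn : 2 ≤ n) (hm : 2 ≤ m) (hb : b < m)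
    (hφ : ∀ p : ℕ, p.Prime → p ∣ c →
      ∃ k : ℕ, 1 ≤ k ∧ 3 ≤ p ^ k ∧ Nat.totient (p ^ k) ∣ n ∧ m ≤ p ^ k - 1) :
    (¬ ∃ x : Fin m → ℕ, (∀ i, 0 < x i) ∧ ∑ i, x i ^ n = b * c ^ n) ∧
    (¬ ∃ x : Fin m → ℕ, (∀ i, 0 < x i) ∧ ∑ i, x i ^ n = c ^ n) := by
  have hc : ∀ p : ℕ, p.Prime → p ∣ c → ∃ k, φ (p ^ k) ∣ n ∧ Fintype.card (Fin m) < p ^ k := by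
    intro p hp hpc
    obtain ⟨k, -, hk, hφk, hmk⟩ := hφ p hp hpc
    exact ⟨k, hφk, by rw [Fintype.card_fin]; omega⟩
  have hn : 0 < n := by omega
  refine ⟨fun ⟨x, hx, hsum⟩ => ?_, fun ⟨x, hx, hsum⟩ => ?_⟩
  · exact sum_pow_ne_mul_pow hn (by rwa [Fintype.card_fin]) hx hc hsum
  · exact sum_pow_ne_mul_pow (b := 1) hn (by rwa [Fintype.card_fin]) hx hc (by rwa [one_mul])

/-- If `n, m ≥ 2`, `b < m` and `c ≥ 1` is such that every prime `p ∣ c` admits `k ≥ 1`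
with `p^k ≥ 3`, `φ(p^k) ∣ n` and `m ≤ p^k - 1`, then `∑ xᵢ^n = b·c^n` has no solution in
positive integers; in particular `∑ xᵢ^n = c^n` has no solution in positive integers. -/
theorem stmt_17 (n m b c : ℕ) (hn : 2 ≤ n) (hm : 2 ≤ m) (hb : b < m) (hc : 1 ≤ c)
    (hφ : ∀ p : ℕ, p.Prime → p ∣ c →
      ∃ k : ℕ, 1 ≤ k ∧ 3 ≤ p ^ k ∧ Nat.totient (p ^ k) ∣ n ∧ m ≤ p ^ k - 1) :
    (¬ ∃ x : Fin m → ℕ, (∀ i, 0 < x i) ∧ ∑ i, x i ^ n = b * c ^ n) ∧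
    (¬ ∃ x : Fin m → ℕ, (∀ i, 0 < x i) ∧ ∑ i, x i ^ n = c ^ n) :=
  stmt_17_general n m b c hn hm hb hφ
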